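/- Let c₁, …, cₙ be mutually independent Bernoulli random variables with P(cᵢ = 1) = pᵢ ∈ (0,1], and let C := Diag(c₁/p₁, …, cₙ/pₙ). Let D := A + B K and L := B K, and sᵢ := Σ_{k=1}^{n} L_{k,i}². Then for every vector x ∈ ℝⁿ, E[ ‖(A + B K C) x‖² ] = xᵀ ( Dᵀ D + Diag(s₁(1/p₁ − 1), …, sₙ(1/pₙ − 1)) ) x, where ‖·‖ is the Euclidean norm. -/

import Mathlib

/-!
Write `C = 1 + Diag(e)` with `eᵢ = cᵢ / pᵢ - 1`, so that `(A + B K C) x = D x + L Diag(x) e`.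
The noise `e` has mean zero, its coordinates are uncorrelated by independence, and
`E[eᵢ²] = 1/pᵢ - 1` because `cᵢ² = cᵢ`. Hence the cross term `2 ⟨D x, L Diag(x) e⟩` vanishes in
expectation and `E‖L Diag(x) e‖² = Σᵢ (1/pᵢ - 1) xᵢ² sᵢ`.
-/

open MeasureTheory ProbabilityTheory Matrix Finset

section MatrixIdentities

variable {ι κ : Type*}

lemma add_mul_diagonal_mulVec [Fintype ι] [DecidableEq ι]
    (A L : Matrix κ ι ℝ) (u x : ι → ℝ) :
    (A + L * diagonal u) *ᵥ x = (A + L) *ᵥ x + (L * diagonal x) *ᵥ fun i => u i - 1 := by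
  have hdiag : diagonal u *ᵥ x = x + diagonal x *ᵥ fun i => u i - 1 := by
    ext i
    simp only [mulVec_diagonal, Pi.add_apply]
    ring
  rw [add_mulVec, add_mulVec, ← mulVec_mulVec, ← mulVec_mulVec, hdiag, mulVec_add, add_assoc]

lemma dotProduct_transpose_mul_self_add_diagonal_mulVec [Fintype ι] [Fintype κ] [DecidableEq ι]
    (D : Matrix κ ι ℝ) (w x : ι → ℝ) :
    x ⬝ᵥ (Dᵀ * D + diagonal w) *ᵥ x = (D *ᵥ x) ⬝ᵥ (D *ᵥ x) + ∑ i, w i * x i ^ 2 := by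
  rw [add_mulVec, dotProduct_add, ← mulVec_mulVec, dotProduct_mulVec, vecMul_transpose]
  simp only [dotProduct, mulVec_diagonal]
  congr 1
  exact sum_congr rfl fun i _ => by ring

lemma transpose_mul_self_apply_self [Fintype κ] (M : Matrix κ ι ℝ) (i : ι) :
    (Mᵀ * M) i i = ∑ k, M k i ^ 2 := by
  simp only [mul_apply, transpose_apply, sq]

end MatrixIdentities

section RandomVector

variable {ι κ Ω : Type*} [Fintype ι] [Fintype κ] [MeasurableSpace Ω] {μ : Measure Ω}
  {v : Ω → ι → ℝ}

lemma integral_dotProduct_const_left (w : ι → ℝ) (hv : ∀ i, Integrable (fun ω => v ω i) μ) :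
    ∫ ω, w ⬝ᵥ v ω ∂μ = w ⬝ᵥ fun i => ∫ ω, v ω i ∂μ := by
  simp only [dotProduct]
  rw [integral_finsetSum _ fun i _ => (hv i).const_mul (w i)]
  simp only [integral_const_mul]

lemma dotProduct_mulVec_eq_sum_sum (Q : Matrix ι ι ℝ) (u : ι → ℝ) :
    u ⬝ᵥ Q *ᵥ u = ∑ i, ∑ j, Q i j * (u i * u j) := by
  simp only [dotProduct, mulVec, Finset.mul_sum]
  exact sum_congr rfl fun i _ => sum_congr rfl fun j _ => by ring

lemma integral_dotProduct_mulVec (Q : Matrix ι ι ℝ)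
    (hv : ∀ i j, Integrable (fun ω => v ω i * v ω j) μ) :
    ∫ ω, v ω ⬝ᵥ Q *ᵥ v ω ∂μ = ∑ i, ∑ j, Q i j * ∫ ω, v ω i * v ω j ∂μ := by
  simp only [dotProduct_mulVec_eq_sum_sum]
  rw [integral_finsetSum]
  · refine sum_congr rfl fun i _ => ?_
    rw [integral_finsetSum _ fun j _ => (hv i j).const_mul _]
    simp only [integral_const_mul]
  · exact fun i _ => integrable_finsetSum _ fun j _ => (hv i j).const_mul _

lemma add_mulVec_dotProduct_self (a : κ → ℝ) (M : Matrix κ ι ℝ) (u : ι → ℝ) :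
    (a + M *ᵥ u) ⬝ᵥ (a + M *ᵥ u) = a ⬝ᵥ a + 2 * ((a ᵥ* M) ⬝ᵥ u) + u ⬝ᵥ (Mᵀ * M) *ᵥ u := by
  rw [← mulVec_mulVec, dotProduct_mulVec u Mᵀ, vecMul_transpose, add_dotProduct,
    dotProduct_add, dotProduct_add, dotProduct_comm (M *ᵥ u) a, dotProduct_mulVec]
  ring

theorem integral_add_mulVec_dotProduct_self [DecidableEq ι] [IsProbabilityMeasure μ]
    (a : κ → ℝ) (M : Matrix κ ι ℝ) (σ : ι → ℝ) (hv : ∀ i, MemLp (fun ω => v ω i) 2 μ)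
    (hmean : ∀ i, ∫ ω, v ω i ∂μ = 0)
    (hcov : ∀ i j, ∫ ω, v ω i * v ω j ∂μ = if i = j then σ i else 0) :
    ∫ ω, (a + M *ᵥ v ω) ⬝ᵥ (a + M *ᵥ v ω) ∂μ = a ⬝ᵥ a + ∑ i, σ i * ∑ k, M k i ^ 2 := by
  have hint : ∀ i, Integrable (fun ω => v ω i) μ := fun i => (hv i).integrable one_le_two
  have hint₂ : ∀ i j, Integrable (fun ω => v ω i * v ω j) μ := fun i j =>
    (hv i).integrable_mul (hv j)
  have hlin : Integrable (fun ω => 2 * ((a ᵥ* M) ⬝ᵥ v ω)) μ :=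
    (integrable_finsetSum _ fun i _ => (hint i).const_mul _).const_mul 2
  have hquad : Integrable (fun ω => v ω ⬝ᵥ (Mᵀ * M) *ᵥ v ω) μ := by
    simp only [dotProduct_mulVec_eq_sum_sum]
    exact integrable_finsetSum _ fun i _ => integrable_finsetSum _ fun j _ =>
      (hint₂ i j).const_mul _
  simp only [add_mulVec_dotProduct_self]
  rw [integral_add ((integrable_const _).fun_add hlin) hquad,
    integral_add (integrable_const _) hlin, integral_const_mul,
    integral_dotProduct_const_left _ hint, integral_dotProduct_mulVec _ hint₂]
  simp [hmean, hcov, transpose_mul_self_apply_self, mul_comm]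

end RandomVector

section Bernoulli

variable {Ω : Type*} [MeasurableSpace Ω] {μ : Measure Ω} {c : Ω → ℝ}

lemma integral_eq_measureReal_of_zero_or_one (hc : Measurable c)
    (h01 : ∀ ω, c ω = 0 ∨ c ω = 1) : ∫ ω, c ω ∂μ = μ.real {ω | c ω = 1} := by
  have hind : c = {ω | c ω = 1}.indicator 1 := by
    ext ω
    rcases h01 ω with h | h <;> simp [h]
  calc ∫ ω, c ω ∂μ = ∫ ω, {ω | c ω = 1}.indicator 1 ω ∂μ := by rw [← hind]
    _ = μ.real {ω | c ω = 1} := integral_indicator_one (hc (measurableSet_singleton 1))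

lemma memLp_div_sub_one_of_zero_or_one [IsFiniteMeasure μ] (hc : Measurable c)
    (h01 : ∀ ω, c ω = 0 ∨ c ω = 1) (p : ℝ) (q : ENNReal) :
    MemLp (fun ω => c ω / p - 1) q μ := by
  refine MemLp.of_bound (by fun_prop) (|p|⁻¹ + 1) (ae_of_all _ fun ω => ?_)
  rcases h01 ω with h | h
  · simp [h]
  · simpa [h] using norm_sub_le (1 / p) 1

variable [IsProbabilityMeasure μ] {p : ℝ}

lemma integral_div_sub_one_of_zero_or_one (hc : Measurable c) (h01 : ∀ ω, c ω = 0 ∨ c ω = 1)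
    (hp : p ≠ 0) (hmean : ∫ ω, c ω ∂μ = p) : ∫ ω, (c ω / p - 1) ∂μ = 0 := by
  have hint : Integrable c μ := by
    simpa using (memLp_div_sub_one_of_zero_or_one hc h01 1 1 (μ := μ)).integrable le_rfl
      |>.fun_add (integrable_const 1)
  rw [integral_sub (hint.div_const p) (integrable_const 1), integral_div, hmean, div_self hp]
  simp

lemma integral_div_sub_one_sq_of_zero_or_one (hc : Measurable c) (h01 : ∀ ω, c ω = 0 ∨ c ω = 1)
    (hp : p ≠ 0) (hmean : ∫ ω, c ω ∂μ = p) :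
    ∫ ω, (c ω / p - 1) * (c ω / p - 1) ∂μ = 1 / p - 1 := by
  -- `c² = c` makes the square an affine function of `c / p - 1`.
  have hsq : ∀ ω, (c ω / p - 1) * (c ω / p - 1) = (1 / p - 2) * (c ω / p - 1) + (1 / p - 1) := by
    intro ω
    rcases h01 ω with h | h <;> simp only [h] <;> field_simp <;> ring
  simp only [hsq]
  rw [integral_add ((memLp_div_sub_one_of_zero_or_one hc h01 p 1).integrable le_rfl |>.const_mul _)
    (integrable_const _), integral_const_mul, integral_div_sub_one_of_zero_or_one hc h01 hp hmean]
  simp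

end Bernoulli

lemma integral_mul_div_sub_one_of_iIndepFun {ι Ω : Type*} [DecidableEq ι] [MeasurableSpace Ω]
    {μ : Measure Ω} [IsProbabilityMeasure μ] {c : ι → Ω → ℝ} {p : ι → ℝ}
    (hmeas : ∀ i, Measurable (c i)) (h01 : ∀ i ω, c i ω = 0 ∨ c i ω = 1) (hp : ∀ i, p i ≠ 0)
    (hmean : ∀ i, ∫ ω, c i ω ∂μ = p i)
    (hindep : iIndepFun (m := fun _ : ι => (inferInstance : MeasurableSpace ℝ)) c μ) (i j : ι) :
    ∫ ω, (c i ω / p i - 1) * (c j ω / p j - 1) ∂μ = if i = j then 1 / p i - 1 else 0 := by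
  split_ifs with hij
  · subst hij
    exact integral_div_sub_one_sq_of_zero_or_one (hmeas i) (h01 i) (hp i) (hmean i)
  · have hind := (hindep.indepFun hij).comp (φ := fun t => t / p i - 1) (ψ := fun t => t / p j - 1)
      (by fun_prop) (by fun_prop)
    have hmul := hind.integral_fun_mul_eq_mul_integral (by fun_prop) (by fun_prop)
    simp only [Function.comp_apply] at hmul
    rw [hmul, integral_div_sub_one_of_zero_or_one (hmeas i) (h01 i) (hp i) (hmean i), zero_mul]

/-- If `c₁, …, cₙ` are mutually independent Bernoulli random variables
with parameters `pᵢ ∈ (0,1]`, `C := Diag(c₁/p₁, …, cₙ/pₙ)`, `D := A + B K`, `L := B K`,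
`sᵢ := Σₖ L_{k,i}²`, then for every `x ∈ ℝⁿ`,
`E[‖(A + B K C) x‖²] = xᵀ (Dᵀ D + Diag(s₁(1/p₁ − 1), …, sₙ(1/pₙ − 1))) x`. -/
theorem expected_squared_norm_image
    {n m : ℕ} (A : Matrix (Fin n) (Fin n) ℝ) (B : Matrix (Fin n) (Fin m) ℝ)
    (K : Matrix (Fin m) (Fin n) ℝ)
    {Ω : Type*} [MeasurableSpace Ω] (μ : Measure Ω) [IsProbabilityMeasure μ]
    (p : Fin n → ℝ) (hp : ∀ i, p i ∈ Set.Ioc (0 : ℝ) 1)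
    (c : Fin n → Ω → ℝ)
    (hmeas : ∀ i, Measurable (c i))
    (h01 : ∀ i ω, c i ω = 0 ∨ c i ω = 1)
    (hber : ∀ i, μ {ω | c i ω = 1} = ENNReal.ofReal (p i))
    (hindep : iIndepFun (m := fun _ : Fin n => (inferInstance : MeasurableSpace ℝ)) c μ)
    (x : Fin n → ℝ) :
    (∫ ω, ∑ i, (((A + B * K * Matrix.diagonal (fun i => c i ω / p i)).mulVec x) i) ^ 2 ∂μ) =
      x ⬝ᵥ (((A + B * K)ᵀ * (A + B * K) + Matrix.diagonal
        (fun i => (∑ k, ((B * K) k i) ^ 2) * (1 / p i - 1))).mulVec x) := by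
  have hp0 : ∀ i, p i ≠ 0 := fun i => (hp i).1.ne'
  have hmean : ∀ i, ∫ ω, c i ω ∂μ = p i := fun i => by
    rw [integral_eq_measureReal_of_zero_or_one (hmeas i) (h01 i), measureReal_def, hber i,
      ENNReal.toReal_ofReal (hp i).1.le]
  have hnoise := integral_add_mulVec_dotProduct_self (μ := μ) ((A + B * K) *ᵥ x)
    (B * K * diagonal x) (fun i => 1 / p i - 1) (v := fun ω i => c i ω / p i - 1)
    (fun i => memLp_div_sub_one_of_zero_or_one (hmeas i) (h01 i) (p i) 2)
    (fun i => integral_div_sub_one_of_zero_or_one (hmeas i) (h01 i) (hp0 i) (hmean i))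
    (integral_mul_div_sub_one_of_iIndepFun hmeas h01 hp0 hmean hindep)
  simp only [← add_mul_diagonal_mulVec] at hnoise
  rw [dotProduct_transpose_mul_self_add_diagonal_mulVec]
  convert hnoise using 2
  · simp only [dotProduct, sq]
  · refine sum_congr rfl fun i _ => ?_
    simp only [mul_apply, diagonal_apply, mul_ite, mul_zero, sum_ite_eq', mem_univ, if_true,
      mul_pow, ← sum_mul]
    ring
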